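/- Let m, n ≥ 1 and let a₁,…,a_m, b₁,…,b_m, c₁,…,c_n, d₁,…,d_n be 2m+2n pairwise distinct complex numbers. Define f(z) = ∏_{i=1}^m (z−a_i)/(z−b_i) and g(z) = ∏_{j=1}^n (z−c_j)/(z−d_j), and set Res(f,g) = ∏_{i=1}^m ∏_{j=1}^n ((a_i−c_j)(b_i−d_j))/((a_i−d_j)(b_i−c_j)), Dis(f) = ( ∏_{i≠i'} (a_i−a_{i'}) · ∏_{i≠i'} (b_i−b_{i'}) ) / ( ∏_{i,i'} (a_i−b_{i'}) · ∏_{i,i'} (b_i−a_{i'}) ), Dis(g) defined analogously with the c's and d's, and Dis(fg) defined analogously with zero list (a₁,…,a_m,c₁,…,c_n) and pole list (b₁,…,b_m,d₁,…,d_n). Then Res(f,g)² = Dis(fg) / ( Dis(f) · Dis(g) ). -/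

import Mathlib

/-!
Split the points of `fg` into those of `f` and those of `g`. Each of the four double products
defining `Dis(fg)` then factors as the product for `f`, the product for `g`, and a product over
pairs `(i, j)` of a factor coming from `f` and one coming from `g`. Per pair these cross terms
are `(aᵢ - cⱼ)(cⱼ - aᵢ)(bᵢ - dⱼ)(dⱼ - bᵢ)` over `(aᵢ - dⱼ)(cⱼ - bᵢ)(bᵢ - cⱼ)(dⱼ - aᵢ)`; the signs
cancel and what remains is the square of the `(i, j)` factor of `Res(f, g)`. So
`Dis(fg) = Dis(f) Dis(g) Res(f, g)²` holds identically, and distinctness of the points makes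
`Dis(f) Dis(g)` nonzero.
-/

open Finset

/-- The discriminant `Dis` of a rational function with zero list `u` and pole list `v`:
`Dis = (∏_{x≠x'} (u x − u x') · ∏_{x≠x'} (v x − v x')) /
       (∏_{x,x'} (u x − v x') · ∏_{x,x'} (v x − u x'))`. -/
noncomputable def disExpr {α : Type*} [Fintype α] [DecidableEq α] (u v : α → ℂ) : ℂ :=
  ((∏ x, ∏ x' ∈ Finset.univ.erase x, (u x - u x')) *
      (∏ x, ∏ x' ∈ Finset.univ.erase x, (v x - v x'))) /
    ((∏ x, ∏ x', (u x - v x')) * (∏ x, ∏ x', (v x - u x')))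

section SumType

variable {α β M : Type*} [Fintype α] [Fintype β] [CommMonoid M]

theorem Fintype.prod_prod_sum_type (F : α ⊕ β → α ⊕ β → M) :
    ∏ p, ∏ q, F p q =
      (∏ x, ∏ x', F (.inl x) (.inl x')) * (∏ y, ∏ y', F (.inr y) (.inr y')) *
        ∏ x, ∏ y, (F (.inl x) (.inr y) * F (.inr y) (.inl x)) := by
  simp only [Fintype.prod_sum_type, prod_mul_distrib]
  rw [prod_comm (f := fun y x => F (.inr y) (.inl x))]
  ac_rfl

variable [DecidableEq α] [DecidableEq β]

theorem Finset.univ_erase_inl (x : α) :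
    (univ : Finset (α ⊕ β)).erase (.inl x) = (univ.erase x).disjSum univ := by
  ext p; cases p <;> simp [eq_comm]

theorem Finset.univ_erase_inr (y : β) :
    (univ : Finset (α ⊕ β)).erase (.inr y) = univ.disjSum (univ.erase y) := by
  ext p; cases p <;> simp [eq_comm]

theorem Fintype.prod_prod_erase_sum_type (F : α ⊕ β → α ⊕ β → M) :
    ∏ p, ∏ q ∈ univ.erase p, F p q =
      (∏ x, ∏ x' ∈ univ.erase x, F (.inl x) (.inl x')) *
        (∏ y, ∏ y' ∈ univ.erase y, F (.inr y) (.inr y')) *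
        ∏ x, ∏ y, (F (.inl x) (.inr y) * F (.inr y) (.inl x)) := by
  simp only [Fintype.prod_sum_type, univ_erase_inl, univ_erase_inr, prod_disjSum,
    prod_mul_distrib]
  rw [prod_comm (f := fun y x => F (.inr y) (.inl x))]
  ac_rfl

end SumType

/-- `Res(f, g)` for `f` with zeros `u`, poles `v` and `g` with zeros `u'`, poles `v'`. -/
def resExpr {K α β : Type*} [Field K] [Fintype α] [Fintype β] (u v : α → K) (u' v' : β → K) :
    K :=
  ∏ x, ∏ y, ((u x - u' y) * (v x - v' y)) / ((u x - v' y) * (v x - u' y))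

theorem resExpr_sq {K α β : Type*} [Field K] [Fintype α] [Fintype β] (u v : α → K)
    (u' v' : β → K) :
    resExpr u v u' v' ^ 2 =
      (∏ x, ∏ y, ((u x - u' y) * (u' y - u x))) * (∏ x, ∏ y, ((v x - v' y) * (v' y - v x))) /
        ((∏ x, ∏ y, ((u x - v' y) * (u' y - v x))) * ∏ x, ∏ y, ((v x - u' y) * (v' y - u x))) := by
  simp only [resExpr, ← prod_pow, ← prod_mul_distrib, ← prod_div_distrib]
  refine prod_congr rfl fun x _ => prod_congr rfl fun y _ => ?_
  rw [← neg_sub (u x) (u' y), ← neg_sub (v x) (v' y), ← neg_sub (v x) (u' y),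
    ← neg_sub (u x) (v' y)]
  -- `ring` would expand the differences inside the inverses; keep them atomic.
  generalize u x - u' y = p, v x - v' y = q, u x - v' y = r, v x - u' y = s
  ring

theorem disExpr_sum_elim {α β : Type*} [Fintype α] [Fintype β] [DecidableEq α] [DecidableEq β]
    (u v : α → ℂ) (u' v' : β → ℂ) :
    disExpr (Sum.elim u u') (Sum.elim v v') =
      disExpr u v * disExpr u' v' * resExpr u v u' v' ^ 2 := by
  simp only [disExpr, resExpr_sq, Fintype.prod_prod_sum_type, Fintype.prod_prod_erase_sum_type,
    Sum.elim_inl, Sum.elim_inr]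
  ring

theorem disExpr_ne_zero {α : Type*} [Fintype α] [DecidableEq α] {u v : α → ℂ}
    (h : Function.Injective (Sum.elim u v)) : disExpr u v ≠ 0 := by
  have hu : Function.Injective u := h.comp Sum.inl_injective
  have hv : Function.Injective v := h.comp Sum.inr_injective
  have huv : ∀ x y, u x ≠ v y := fun x y e => Sum.inl_ne_inr (h (a₁ := .inl x) (a₂ := .inr y) e)
  refine div_ne_zero (mul_ne_zero ?_ ?_) (mul_ne_zero ?_ ?_) <;>
    refine prod_ne_zero_iff.2 fun x _ => prod_ne_zero_iff.2 fun x' hx' => sub_ne_zero.2 ?_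
  · exact hu.ne (ne_of_mem_erase hx').symm
  · exact hv.ne (ne_of_mem_erase hx').symm
  · exact huv x x'
  · exact (huv x' x).symm

theorem resultant_discriminant_polarization_general (m n : ℕ)
    (a b : Fin m → ℂ) (c d : Fin n → ℂ)
    (hdist : Function.Injective
      (Sum.elim (Sum.elim a b) (Sum.elim c d) : (Fin m ⊕ Fin m) ⊕ (Fin n ⊕ Fin n) → ℂ)) :
    (∏ i, ∏ j, ((a i - c j) * (b i - d j)) / ((a i - d j) * (b i - c j))) ^ 2 =
      disExpr (Sum.elim a c) (Sum.elim b d) / (disExpr a b * disExpr c d) := by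
  have hf : disExpr a b ≠ 0 := disExpr_ne_zero (hdist.comp Sum.inl_injective)
  have hg : disExpr c d ≠ 0 := disExpr_ne_zero (hdist.comp Sum.inr_injective)
  rw [disExpr_sum_elim, mul_div_cancel_left₀ _ (mul_ne_zero hf hg)]
  rfl

/-- The meromorphic resultant is the polarization of the discriminant:
`Res(f,g)² = Dis(fg)/(Dis(f)·Dis(g))` for `f(z) = ∏(z−aᵢ)/(z−bᵢ)`,
`g(z) = ∏(z−cⱼ)/(z−dⱼ)` with all `2m+2n` points pairwise distinct. -/
theorem resultant_discriminant_polarization (m n : ℕ) (hm : 1 ≤ m) (hn : 1 ≤ n)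
    (a b : Fin m → ℂ) (c d : Fin n → ℂ)
    (hdist : Function.Injective
      (Sum.elim (Sum.elim a b) (Sum.elim c d) : (Fin m ⊕ Fin m) ⊕ (Fin n ⊕ Fin n) → ℂ)) :
    (∏ i, ∏ j, ((a i - c j) * (b i - d j)) / ((a i - d j) * (b i - c j))) ^ 2 =
      disExpr (Sum.elim a c) (Sum.elim b d) / (disExpr a b * disExpr c d) :=
  resultant_discriminant_polarization_general m n a b c d hdist
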